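/- arXiv:1601.04696 — 2 statements merged into one kernel-verified Lean document; each statement's English description precedes it below -/
import Mathlib

section
/- Let σ, ρ, μ > 0, r1 ≥ 1, δ ∈ (0,1), a > 0, and let (z_n) be a sequence of nonzero complex numbers such that for every r ≥ r1 the number of indices n with |z_n| ≤ r is at most 2σ·(2e)^ρ·r^ρ. Let p be a natural number with p ≥ 1, p + 1 > ρ and δ(p+1) − ρ ≥ μ, and set C2 = 2σ(p+1)(2e)^ρ/(p+1−ρ). Suppose R ≥ max( r1, (a(p+1)/p)^{1/δ} ). Then for every z with |z| ≤ a·R^{1−δ}, the sum w(z) = Σ_{n : |z_n| ≥ R} [ Log(1 − z/z_n) + Σ_{k=1}^{p} (z/z_n)^k / k ] converges absolutely and satisfies |w(z)| ≤ C2·a^{p+1}·R^{−μ}. -/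
/-!
For `‖z_n‖ ≥ R` the ratio `ξ = w / z_n` satisfies `‖ξ‖ ≤ a R^{-δ} ≤ p/(p+1)`, so the tail of the
Taylor series of `Log(1 - ξ)`, bounded by `‖ξ‖^{p+1} / ((p+1)(1-‖ξ‖))`, is at most `‖ξ‖^{p+1}`.
Hence `‖w(z)‖ ≤ (a R^{1-δ})^{p+1} Σ_{‖z_n‖ ≥ R} ‖z_n‖^{-s}` with `s = p + 1`. Writing
`‖z_n‖^{-s} = s ∫_{‖z_n‖}^∞ t^{-s-1} dt` and exchanging sum and integral turns that sum into
`s ∫_R^∞ N(t) t^{-s-1} dt`, where `N(t) ≤ K t^ρ` counts the `z_n` in the closed disc of radius `t`;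
this is at most `K s R^{ρ-s} / (s - ρ)`.
-/

open MeasureTheory Set

namespace Complex

theorem logTaylor_succ_neg (p : ℕ) (ξ : ℂ) :
    logTaylor (p + 1) (-ξ) = -∑ k ∈ Finset.Icc 1 p, ξ ^ k / k := by
  induction p with
  | zero => simp [logTaylor]
  | succ p ih =>
    rw [logTaylor_succ, Pi.add_apply, ih, Finset.sum_Icc_succ_top (by omega)]
    push_cast
    have hsign : (-1 : ℂ) ^ (p + 1 + 1) * (-1) ^ (p + 1) = -1 := by
      rw [← pow_add]; exact Odd.neg_one_pow ⟨p + 1, by ring⟩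
    rw [neg_pow ξ]
    linear_combination ξ ^ (p + 1) / (p + 1) * hsign

theorem norm_log_one_sub_add_sum_le (p : ℕ) {ξ : ℂ} (hξ : ‖ξ‖ < 1) :
    ‖log (1 - ξ) + ∑ k ∈ Finset.Icc 1 p, ξ ^ k / k‖ ≤ ‖ξ‖ ^ (p + 1) * (1 - ‖ξ‖)⁻¹ / (p + 1) := by
  simpa [logTaylor_succ_neg, ← sub_eq_add_neg] using
    norm_log_sub_logTaylor_le p (z := -ξ) (by rwa [norm_neg])

theorem norm_log_one_sub_add_sum_le_pow {p : ℕ} {ξ : ℂ} (hξ : ‖ξ‖ ≤ p / (p + 1)) :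
    ‖log (1 - ξ) + ∑ k ∈ Finset.Icc 1 p, ξ ^ k / k‖ ≤ ‖ξ‖ ^ (p + 1) := by
  have hp : (0 : ℝ) < p + 1 := by positivity
  have hgap : (p + 1 : ℝ)⁻¹ ≤ 1 - ‖ξ‖ := by
    rw [le_div_iff₀ hp] at hξ
    rw [inv_le_iff_one_le_mul₀ hp]
    nlinarith
  have hlt : ‖ξ‖ < 1 := by linarith [inv_pos.2 hp]
  calc _ ≤ ‖ξ‖ ^ (p + 1) * (1 - ‖ξ‖)⁻¹ / (p + 1) := norm_log_one_sub_add_sum_le p hlt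
    _ ≤ ‖ξ‖ ^ (p + 1) * (p + 1) / (p + 1) := by
      gcongr
      exact inv_le_of_inv_le₀ (by positivity) hgap
    _ = ‖ξ‖ ^ (p + 1) := by field_simp

end Complex

theorem mul_rpow_one_sub_div_le {a c δ R : ℝ} (ha : 0 ≤ a) (hc : 0 < c) (hδ : 0 < δ)
    (hR : 0 < R) (h : (a / c) ^ (1 / δ) ≤ R) : a * R ^ (1 - δ) / R ≤ c := by
  rw [one_div, Real.rpow_inv_le_iff_of_pos (by positivity) hR.le hδ, div_le_iff₀ hc] at h
  calc a * R ^ (1 - δ) / R = a / R ^ δ := by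
        rw [Real.rpow_sub hR, Real.rpow_one]; field_simp
    _ ≤ c := by rw [div_le_iff₀ (by positivity)]; linarith

theorem mul_rpow_pow_mul_le {a C R δ ρ μ : ℝ} {n : ℕ} (ha : 0 ≤ a) (hC : 0 ≤ C) (hR : 1 ≤ R)
    (hμ : μ ≤ δ * n - ρ) :
    (a * R ^ (1 - δ)) ^ n * (C * R ^ (ρ - n)) ≤ C * a ^ n * R ^ (-μ) := by
  calc (a * R ^ (1 - δ)) ^ n * (C * R ^ (ρ - n)) = C * a ^ n * R ^ ((1 - δ) * n + (ρ - n)) := by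
        rw [mul_pow, ← Real.rpow_mul_natCast (by linarith), Real.rpow_add (by linarith)]
        ring
    _ ≤ C * a ^ n * R ^ (-μ) := by
        gcongr
        linarith

theorem ofReal_rpow_neg_eq_mul_lintegral {c s : ℝ} (hc : 0 < c) (hs : 0 < s) :
    ENNReal.ofReal (c ^ (-s)) =
      ENNReal.ofReal s * ∫⁻ t in Ioi c, ENNReal.ofReal (t ^ (-s - 1)) := by
  have hexp : -s - 1 < -1 := by linarith
  rw [← ofReal_integral_eq_lintegral_ofReal (integrableOn_Ioi_rpow_of_lt hexp hc)
      (ae_restrict_of_forall_mem measurableSet_Ioi fun t ht =>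
        Real.rpow_nonneg (hc.trans ht).le _),
    integral_Ioi_rpow_of_lt hexp hc, ← ENNReal.ofReal_mul hs.le]
  congr 1
  rw [sub_add_cancel]
  field_simp

section Counting

variable {ι : Type*} {x : ι → ℝ}

theorem tsum_indicator_Ioi_le_of_ncard_le {P : ι → Prop} {t N : ℝ}
    (hfin : {i | x i ≤ t}.Finite) (hcard : ({i | x i ≤ t}.ncard : ℝ) ≤ N) (F : ℝ → ENNReal) :
    ∑' i : {i // P i}, (Ioi (x i)).indicator F t ≤ ENNReal.ofReal N * F t := by
  have hsub : ({i : {i // P i} | x i < t}.encard : ENNReal) ≤ ENNReal.ofReal N := by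
    calc ({i : {i // P i} | x i < t}.encard : ENNReal)
        ≤ ({i | x i ≤ t}.encard : ENNReal) := by
          gcongr
          exact encard_le_encard_of_injOn (fun _ (hi : x _ < t) => hi.le)
            Subtype.val_injective.injOn
      _ = ENNReal.ofReal ({i | x i ≤ t}.ncard : ℝ) := by
          rw [← hfin.cast_ncard_eq, ENat.toENNReal_coe, ENNReal.ofReal_natCast]
      _ ≤ ENNReal.ofReal N := ENNReal.ofReal_le_ofReal hcard
  calc ∑' i : {i // P i}, (Ioi (x i)).indicator F t
      = ∑' i : {i : {i // P i} | x i < t}, F t := (tsum_subtype _ fun _ => F t).symm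
    _ = {i : {i // P i} | x i < t}.encard * F t := ENNReal.tsum_set_const _ _
    _ ≤ ENNReal.ofReal N * F t := by gcongr

variable [Countable ι] {R K ρ s : ℝ}

theorem tsum_ofReal_rpow_neg_le_of_ncard_le (hK : 0 ≤ K) (hR : 0 < R) (hs : 0 < s) (hρs : ρ < s)
    (hcount : ∀ t, R ≤ t → {i | x i ≤ t}.Finite ∧ ({i | x i ≤ t}.ncard : ℝ) ≤ K * t ^ ρ) :
    ∑' i : {i // R ≤ x i}, ENNReal.ofReal (x i ^ (-s)) ≤
      ENNReal.ofReal (K * s / (s - ρ) * R ^ (ρ - s)) := by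
  set F : ℝ → ENNReal := fun t => ENNReal.ofReal (t ^ (-s - 1))
  have hlayer : ∀ i : {i // R ≤ x i}, ENNReal.ofReal (x i ^ (-s)) =
      ENNReal.ofReal s * ∫⁻ t in Ioi R, (Ioi (x i)).indicator F t := by
    intro i
    rw [ofReal_rpow_neg_eq_mul_lintegral (hR.trans_le i.2) hs,
      lintegral_indicator measurableSet_Ioi,
      Measure.restrict_restrict measurableSet_Ioi, Ioi_inter_Ioi, max_eq_left i.2]
  have hexp : ρ - s - 1 < -1 := by linarith
  calc ∑' i : {i // R ≤ x i}, ENNReal.ofReal (x i ^ (-s))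
      = ENNReal.ofReal s * ∫⁻ t in Ioi R, ∑' i : {i // R ≤ x i}, (Ioi (x i)).indicator F t := by
        rw [tsum_congr hlayer, ENNReal.tsum_mul_left,
          lintegral_tsum fun _ =>
            ((by fun_prop : Measurable F).indicator measurableSet_Ioi).aemeasurable]
    _ ≤ ENNReal.ofReal s * ∫⁻ t in Ioi R, ENNReal.ofReal K * ENNReal.ofReal (t ^ (ρ - s - 1)) := by
        gcongr 1
        refine setLIntegral_mono ?_ fun t ht => ?_
        · fun_prop
        obtain ⟨hfin, hcard⟩ := hcount t ht.le
        have ht0 : 0 < t := hR.trans ht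
        calc _ ≤ ENNReal.ofReal (K * t ^ ρ) * F t := tsum_indicator_Ioi_le_of_ncard_le hfin hcard F
          _ = _ := by
            rw [← ENNReal.ofReal_mul' (by positivity), mul_assoc, ← Real.rpow_add ht0,
              ENNReal.ofReal_mul' (by positivity)]
            ring_nf
    _ = ENNReal.ofReal (K * s / (s - ρ) * R ^ (ρ - s)) := by
        rw [lintegral_const_mul _ (by fun_prop), ← ofReal_integral_eq_lintegral_ofReal
            (integrableOn_Ioi_rpow_of_lt hexp hR)
            (ae_restrict_of_forall_mem measurableSet_Ioi fun t ht =>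
              Real.rpow_nonneg (hR.trans ht).le _),
          integral_Ioi_rpow_of_lt hexp hR, sub_add_cancel, ← ENNReal.ofReal_mul hK,
          ← ENNReal.ofReal_mul hs.le, neg_div, ← div_neg, neg_sub]
        ring_nf

theorem summable_rpow_neg_and_tsum_le_of_ncard_le (hK : 0 ≤ K) (hR : 0 < R) (hs : 0 < s)
    (hρs : ρ < s)
    (hcount : ∀ t, R ≤ t → {i | x i ≤ t}.Finite ∧ ({i | x i ≤ t}.ncard : ℝ) ≤ K * t ^ ρ) :
    Summable (fun i : {i // R ≤ x i} => x i ^ (-s)) ∧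
      ∑' i : {i // R ≤ x i}, x i ^ (-s) ≤ K * s / (s - ρ) * R ^ (ρ - s) := by
  have hnonneg : ∀ i : {i // R ≤ x i}, 0 ≤ x i ^ (-s) :=
    fun i => Real.rpow_nonneg (hR.le.trans i.2) _
  have hle := tsum_ofReal_rpow_neg_le_of_ncard_le hK hR hs hρs hcount
  have hsum : Summable (fun i : {i // R ≤ x i} => x i ^ (-s)) :=
    (ENNReal.summable_toReal (ne_top_of_le_ne_top ENNReal.ofReal_ne_top hle)).congr
      fun i => ENNReal.toReal_ofReal (hnonneg i)
  refine ⟨hsum, (ENNReal.ofReal_le_ofReal_iff ?_).1 ?_⟩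
  · have : 0 < s - ρ := by linarith
    positivity
  · rwa [ENNReal.ofReal_tsum_of_nonneg hnonneg hsum]

end Counting

theorem norm_log_one_sub_div_add_sum_le {p : ℕ} {w ζ : ℂ} {A R : ℝ} (hw : ‖w‖ ≤ A)
    (hR : 0 < R) (hζ : R ≤ ‖ζ‖) (hAR : A / R ≤ p / (p + 1)) :
    ‖Complex.log (1 - w / ζ) + ∑ k ∈ Finset.Icc 1 p, (w / ζ) ^ k / (k : ℂ)‖ ≤
      A ^ (p + 1) * ‖ζ‖ ^ (-((p : ℝ) + 1)) := by
  have hA : 0 ≤ A := (norm_nonneg w).trans hw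
  have hratio : ‖w / ζ‖ ≤ A / ‖ζ‖ := by
    rw [norm_div]; gcongr
  calc _ ≤ ‖w / ζ‖ ^ (p + 1) := Complex.norm_log_one_sub_add_sum_le_pow
        (hratio.trans ((div_le_div_of_nonneg_left hA hR hζ).trans hAR))
    _ ≤ (A / ‖ζ‖) ^ (p + 1) := by gcongr
    _ = A ^ (p + 1) * ‖ζ‖ ^ (-((p : ℝ) + 1)) := by
        rw [div_pow, div_eq_mul_inv, Real.rpow_neg (norm_nonneg _)]
        norm_cast

theorem log_sum_bound_general
    (σ ρ μ : ℝ) (hσ : 0 < σ)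
    (r1 : ℝ) (hr1 : 1 ≤ r1) (δ a : ℝ) (hδ : δ ∈ Set.Ioo (0 : ℝ) 1) (ha : 0 < a)
    (z : ℕ → ℂ)
    (hcount : ∀ r : ℝ, r1 ≤ r → {n : ℕ | ‖z n‖ ≤ r}.Finite ∧
      ({n : ℕ | ‖z n‖ ≤ r}.ncard : ℝ) ≤ 2 * σ * (2 * Real.exp 1) ^ ρ * r ^ ρ)
    (p : ℕ) (hp1 : 1 ≤ p) (hpρ : ρ < p + 1) (hpμ : μ ≤ δ * (p + 1) - ρ)
    (R : ℝ) (hR : max r1 ((a * (p + 1) / p) ^ (1 / δ)) ≤ R) :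
    ∀ w : ℂ, ‖w‖ ≤ a * R ^ (1 - δ) →
      Summable (fun n : {n : ℕ // R ≤ ‖z n‖} =>
        ‖Complex.log (1 - w / z (n : ℕ)) +
          ∑ k ∈ Finset.Icc 1 p, (w / z (n : ℕ)) ^ k / (k : ℂ)‖) ∧
      ‖∑' n : {n : ℕ // R ≤ ‖z n‖},
          (Complex.log (1 - w / z (n : ℕ)) +
            ∑ k ∈ Finset.Icc 1 p, (w / z (n : ℕ)) ^ k / (k : ℂ))‖ ≤
        (2 * σ * (p + 1) * (2 * Real.exp 1) ^ ρ / (p + 1 - ρ)) * a ^ (p + 1) * R ^ (-μ) := by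
  intro w hw
  obtain ⟨hr1R, hδR⟩ := max_le_iff.1 hR
  have hR1 : 1 ≤ R := hr1.trans hr1R
  have hR0 : 0 < R := one_pos.trans_le hR1
  have hp : (0 : ℝ) < p := by exact_mod_cast hp1
  have hAR : a * R ^ (1 - δ) / R ≤ p / (p + 1) :=
    mul_rpow_one_sub_div_le ha.le (by positivity) hδ.1 hR0 (by rwa [div_div_eq_mul_div])
  have hterm := fun n : {n : ℕ // R ≤ ‖z n‖} =>
    norm_log_one_sub_div_add_sum_le (p := p) hw hR0 n.2 hAR
  obtain ⟨hsum, hle⟩ := summable_rpow_neg_and_tsum_le_of_ncard_le (by positivity) hR0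
    (by positivity) hpρ fun t ht => hcount t (hr1R.trans ht)
  refine ⟨(hsum.mul_left _).of_nonneg_of_le (fun _ => norm_nonneg _) hterm, ?_⟩
  have hgap : 0 < (p : ℝ) + 1 - ρ := by linarith
  calc _ ≤ ∑' n : {n : ℕ // R ≤ ‖z n‖}, (a * R ^ (1 - δ)) ^ (p + 1) * ‖z n‖ ^ (-((p : ℝ) + 1)) :=
        tsum_of_norm_bounded (hsum.mul_left _).hasSum hterm
    _ = (a * R ^ (1 - δ)) ^ (p + 1) * ∑' n : {n : ℕ // R ≤ ‖z n‖}, ‖z n‖ ^ (-((p : ℝ) + 1)) :=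
        tsum_mul_left
    _ ≤ (a * R ^ (1 - δ)) ^ (p + 1) * (2 * σ * (2 * Real.exp 1) ^ ρ * (p + 1) / (p + 1 - ρ) *
          R ^ (ρ - (p + 1))) := by gcongr
    _ ≤ 2 * σ * (2 * Real.exp 1) ^ ρ * (p + 1) / (p + 1 - ρ) * a ^ (p + 1) * R ^ (-μ) := by
        have key := mul_rpow_pow_mul_le (n := p + 1) ha.le (by positivity) hR1
          (C := 2 * σ * (2 * Real.exp 1) ^ ρ * (p + 1) / (p + 1 - ρ)) (by push_cast; exact hpμ)
        push_cast at key
        exact key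
    _ = _ := by ring

/-- under the zero-counting hypothesis, for `p ≥ 1`, `p + 1 > ρ`,
`δ(p+1) - ρ ≥ μ` and `R ≥ max(r₁, (a(p+1)/p)^{1/δ})`, the sum of logarithms of the
Weierstrass primary factors `w(z) = Σ_{|z_n| ≥ R} [Log(1 - z/z_n) + Σ_{k=1}^p (z/z_n)^k/k]`
converges absolutely in the disk `|z| ≤ a·R^{1-δ}` and satisfies `|w(z)| ≤ C₂ a^{p+1} R^{-μ}`. -/
theorem log_sum_bound
    (σ ρ μ : ℝ) (hσ : 0 < σ) (hρ : 0 < ρ) (hμ : 0 < μ)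
    (r1 : ℝ) (hr1 : 1 ≤ r1) (δ a : ℝ) (hδ : δ ∈ Set.Ioo (0 : ℝ) 1) (ha : 0 < a)
    (z : ℕ → ℂ) (hz : ∀ n, z n ≠ 0)
    (hcount : ∀ r : ℝ, r1 ≤ r → {n : ℕ | ‖z n‖ ≤ r}.Finite ∧
      ({n : ℕ | ‖z n‖ ≤ r}.ncard : ℝ) ≤ 2 * σ * (2 * Real.exp 1) ^ ρ * r ^ ρ)
    (p : ℕ) (hp1 : 1 ≤ p) (hpρ : ρ < p + 1) (hpμ : μ ≤ δ * (p + 1) - ρ)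
    (R : ℝ) (hR : max r1 ((a * (p + 1) / p) ^ (1 / δ)) ≤ R) :
    ∀ w : ℂ, ‖w‖ ≤ a * R ^ (1 - δ) →
      Summable (fun n : {n : ℕ // R ≤ ‖z n‖} =>
        ‖Complex.log (1 - w / z (n : ℕ)) +
          ∑ k ∈ Finset.Icc 1 p, (w / z (n : ℕ)) ^ k / (k : ℂ)‖) ∧
      ‖∑' n : {n : ℕ // R ≤ ‖z n‖},
          (Complex.log (1 - w / z (n : ℕ)) +
            ∑ k ∈ Finset.Icc 1 p, (w / z (n : ℕ)) ^ k / (k : ℂ))‖ ≤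
        (2 * σ * (p + 1) * (2 * Real.exp 1) ^ ρ / (p + 1 - ρ)) * a ^ (p + 1) * R ^ (-μ) :=
  log_sum_bound_general σ ρ μ hσ r1 hr1 δ a hδ ha z hcount p hp1 hpρ hpμ R hR
end

section
/- Let p ≥ 1 be a natural number, μ > 0, r > 0, ε ∈ (0, 1/2], and let g(z) = a_0 + a_1 z + … + a_p z^p be a complex polynomial of degree at most p. Suppose that g(kr) = ζ_k for k = 1, …, p+1, where |ζ_k| ≤ ε(1+ε)·k^{−μ}. Then the coefficients satisfy |a_{j−1}| ≤ ε(1+ε)·r^{−(j−1)}·(1/W)·Σ_{k=1}^{p+1} |W_{kj}|·k^{−μ} for each j = 1, …, p+1, and consequently |g(z)| ≤ ε(1+ε)·A_p for every z in the closed disk |z| ≤ r. -/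
/-!
Writing `b_j = a_j r^j`, the interpolation conditions say `V b = ζ` for the Vandermonde matrix
`V = (k^{j-1})`. Cramer's rule in the form `det V • b = adj V *ᵥ ζ` bounds each `|b_j|` by
`(1/W) Σ_k |W_{kj}| |ζ_k|`, and on the disk `|z| ≤ r` the triangle inequality bounds `|g(z)|`
by `Σ_j |a_j| r^j = Σ_j |b_j|`, which sums these bounds to `ε(1+ε) A_p`.
-/

noncomputable section

/-- The `(p+1)×(p+1)` Vandermonde matrix with entries `c_{kj} = k^{j-1}`, `k, j = 1, …, p+1`. -/
def vmat (p : ℕ) : Matrix (Fin (p + 1)) (Fin (p + 1)) ℝ :=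
  fun k j => ((k : ℕ) + 1 : ℝ) ^ (j : ℕ)

/-- Its determinant `W = 1!·2!·…·p!`. -/
def Wdet (p : ℕ) : ℝ := (vmat p).det

/-- The cofactor `W_{kj}` of the entry in (1-based) row `k+1`, column `j+1`. -/
def cofactor (p : ℕ) (k j : Fin (p + 1)) : ℝ :=
  (-1) ^ ((k : ℕ) + (j : ℕ)) * ((vmat p).submatrix k.succAbove j.succAbove).det

/-- The Vandermonde cofactor constant `A_p(μ) = (1/W)·Σ_k Σ_j |W_{kj}|·k^{-μ}`. -/
def Ap (p : ℕ) (μ : ℝ) : ℝ :=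
  (1 / Wdet p) * ∑ k : Fin (p + 1), ∑ j : Fin (p + 1),
    |cofactor p k j| * ((k : ℕ) + 1 : ℝ) ^ (-μ)

open Matrix

theorem Matrix.abs_det_mul_norm_le_of_map_ofReal_mulVec_eq {n : Type*} [Fintype n]
    [DecidableEq n] (A : Matrix n n ℝ) {b ζ : n → ℂ} (h : A.map (↑) *ᵥ b = ζ) (j : n) :
    |A.det| * ‖b j‖ ≤ ∑ k, |A.adjugate j k| * ‖ζ k‖ := by
  have hcramer : (A.det : ℂ) • b = A.adjugate.map (↑) *ᵥ ζ := by
    have hdet : (A.det : ℂ) = (A.map (↑)).det := Complex.ofRealHom.map_det A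
    have hadj : A.adjugate.map ((↑) : ℝ → ℂ) = (A.map (↑)).adjugate :=
      Complex.ofRealHom.map_adjugate A
    rw [hdet, hadj, ← h, mulVec_mulVec, adjugate_mul, smul_mulVec, one_mulVec]
  calc |A.det| * ‖b j‖ = ‖((A.det : ℂ) • b) j‖ := by
        rw [Pi.smul_apply, smul_eq_mul, norm_mul, Complex.norm_real, Real.norm_eq_abs]
    _ = ‖∑ k, (A.adjugate j k : ℂ) * ζ k‖ := by rw [hcramer]; rfl
    _ ≤ ∑ k, ‖(A.adjugate j k : ℂ) * ζ k‖ := norm_sum_le _ _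
    _ = ∑ k, |A.adjugate j k| * ‖ζ k‖ := by
        simp only [norm_mul, Complex.norm_real, Real.norm_eq_abs]

theorem norm_sum_mul_pow_le {𝕜 : Type*} [NormedField 𝕜] {n : ℕ} (a : Fin n → 𝕜) {z : 𝕜}
    {r : ℝ} (hz : ‖z‖ ≤ r) :
    ‖∑ j, a j * z ^ (j : ℕ)‖ ≤ ∑ j, ‖a j‖ * r ^ (j : ℕ) :=
  (norm_sum_le _ _).trans <| Finset.sum_le_sum fun j _ => by
    rw [norm_mul, norm_pow]
    gcongr

theorem vmat_eq_vandermonde (p : ℕ) :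
    vmat p = vandermonde fun k : Fin (p + 1) => ((k : ℕ) + 1 : ℝ) :=
  rfl

theorem Wdet_pos (p : ℕ) : 0 < Wdet p := by
  rw [Wdet, vmat_eq_vandermonde, det_vandermonde]
  refine Finset.prod_pos fun i _ => Finset.prod_pos fun j hj => ?_
  have hij : ((i : ℕ) : ℝ) < (j : ℕ) := by exact_mod_cast Finset.mem_Ioi.mp hj
  linarith

theorem adjugate_vmat_apply (p : ℕ) (j k : Fin (p + 1)) :
    (vmat p).adjugate j k = cofactor p k j := by
  rw [adjugate_fin_succ_eq_det_submatrix, cofactor]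

theorem vmat_map_mulVec_eq {p : ℕ} {r : ℝ} {a ζ : Fin (p + 1) → ℂ}
    (hval : ∀ k : Fin (p + 1),
      (∑ j : Fin (p + 1), a j * (((((k : ℕ) + 1 : ℝ)) * r : ℝ) : ℂ) ^ (j : ℕ)) = ζ k) :
    (vmat p).map ((↑) : ℝ → ℂ) *ᵥ (fun j => a j * (r : ℂ) ^ (j : ℕ)) = ζ := by
  funext k
  rw [← hval k, mulVec, dotProduct]
  refine Finset.sum_congr rfl fun j _ => ?_
  rw [map_apply, vmat, Complex.ofReal_mul, mul_pow]
  push_cast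
  ring

theorem norm_mul_abs_pow_le_cofactor_sum {p : ℕ} {r C : ℝ} {w : Fin (p + 1) → ℝ}
    {a ζ : Fin (p + 1) → ℂ}
    (hval : ∀ k : Fin (p + 1),
      (∑ j : Fin (p + 1), a j * (((((k : ℕ) + 1 : ℝ)) * r : ℝ) : ℂ) ^ (j : ℕ)) = ζ k)
    (hζ : ∀ k, ‖ζ k‖ ≤ C * w k) (j : Fin (p + 1)) :
    ‖a j‖ * |r| ^ (j : ℕ) ≤ C * ((1 / Wdet p) * ∑ k, |cofactor p k j| * w k) := by
  have hW := Wdet_pos p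
  have hcramer := (vmat p).abs_det_mul_norm_le_of_map_ofReal_mulVec_eq
    (vmat_map_mulVec_eq hval) j
  simp only [adjugate_vmat_apply, norm_mul, norm_pow, Complex.norm_real, Real.norm_eq_abs]
    at hcramer
  rw [← Wdet, abs_of_pos hW] at hcramer
  rw [one_div_mul_eq_div, mul_div_assoc', le_div_iff₀' hW]
  calc Wdet p * (‖a j‖ * |r| ^ (j : ℕ)) ≤ ∑ k, |cofactor p k j| * ‖ζ k‖ := hcramer
    _ ≤ ∑ k, |cofactor p k j| * (C * w k) := by gcongr with k; exact hζ k
    _ = C * ∑ k, |cofactor p k j| * w k := by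
        rw [Finset.mul_sum]
        exact Finset.sum_congr rfl fun k _ => by ring

theorem polynomial_coefficient_bound_general
    (p : ℕ) (μ r ε : ℝ) (hr : 0 < r)
    (a : Fin (p + 1) → ℂ) (ζ : Fin (p + 1) → ℂ)
    (hval : ∀ k : Fin (p + 1),
      (∑ j : Fin (p + 1), a j * (((((k : ℕ) + 1 : ℝ)) * r : ℝ) : ℂ) ^ (j : ℕ)) = ζ k)
    (hζ : ∀ k : Fin (p + 1), ‖ζ k‖ ≤ ε * (1 + ε) * ((k : ℕ) + 1 : ℝ) ^ (-μ)) :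
    (∀ j : Fin (p + 1), ‖a j‖ ≤ ε * (1 + ε) * r ^ (-((j : ℕ) : ℝ)) *
      ((1 / Wdet p) * ∑ k : Fin (p + 1), |cofactor p k j| * ((k : ℕ) + 1 : ℝ) ^ (-μ))) ∧
    ∀ z : ℂ, ‖z‖ ≤ r →
      ‖∑ j : Fin (p + 1), a j * z ^ (j : ℕ)‖ ≤ ε * (1 + ε) * Ap p μ := by
  have hb := norm_mul_abs_pow_le_cofactor_sum hval hζ
  simp only [abs_of_pos hr] at hb
  refine ⟨fun j => ?_, fun z hz => ?_⟩
  · have hrj : 0 < r ^ (j : ℕ) := pow_pos hr _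
    rw [Real.rpow_neg hr.le, Real.rpow_natCast, mul_right_comm, ← div_eq_mul_inv,
      le_div_iff₀ hrj]
    exact hb j
  · calc ‖∑ j, a j * z ^ (j : ℕ)‖ ≤ ∑ j, ‖a j‖ * r ^ (j : ℕ) := norm_sum_mul_pow_le a hz
      _ ≤ ∑ j, ε * (1 + ε) *
          ((1 / Wdet p) * ∑ k, |cofactor p k j| * ((k : ℕ) + 1 : ℝ) ^ (-μ)) :=
        Finset.sum_le_sum fun j _ => hb j
      _ = ε * (1 + ε) * Ap p μ := by
        rw [Ap, Finset.sum_comm, ← Finset.mul_sum, ← Finset.mul_sum]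

/-- if a polynomial `g(z) = Σ_{j=0}^p a_j z^j` satisfies `g(kr) = ζ_k` with
`|ζ_k| ≤ ε(1+ε)k^{-μ}` for `k = 1, …, p+1`, then the coefficients satisfy Cramer's-rule
bounds and `|g(z)| ≤ ε(1+ε)·A_p` on the closed disk `|z| ≤ r`. -/
theorem polynomial_coefficient_bound
    (p : ℕ) (hp : 1 ≤ p) (μ r ε : ℝ) (hμ : 0 < μ) (hr : 0 < r)
    (hε : ε ∈ Set.Ioc (0 : ℝ) (1 / 2))
    (a : Fin (p + 1) → ℂ) (ζ : Fin (p + 1) → ℂ)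
    (hval : ∀ k : Fin (p + 1),
      (∑ j : Fin (p + 1), a j * (((((k : ℕ) + 1 : ℝ)) * r : ℝ) : ℂ) ^ (j : ℕ)) = ζ k)
    (hζ : ∀ k : Fin (p + 1), ‖ζ k‖ ≤ ε * (1 + ε) * ((k : ℕ) + 1 : ℝ) ^ (-μ)) :
    (∀ j : Fin (p + 1), ‖a j‖ ≤ ε * (1 + ε) * r ^ (-((j : ℕ) : ℝ)) *
      ((1 / Wdet p) * ∑ k : Fin (p + 1), |cofactor p k j| * ((k : ℕ) + 1 : ℝ) ^ (-μ))) ∧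
    ∀ z : ℂ, ‖z‖ ≤ r →
      ‖∑ j : Fin (p + 1), a j * z ^ (j : ℕ)‖ ≤ ε * (1 + ε) * Ap p μ :=
  polynomial_coefficient_bound_general p μ r ε hr a ζ hval hζ
end
end
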